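/- arXiv:2111.06082 — 5 statements merged into one kernel-verified Lean document; each statement's English description precedes it below -/
import Mathlib

section
/- Let K be a field of characteristic ≠ 2, n a positive integer, B ∈ GL_n(K) a symmetric matrix, and let Y ∈ E₋(B) = {X ∈ K^{n×n} : B Xᵀ B⁻¹ = −X} be invertible. Then det(Y) and det(B) lie in the same square class of K, i.e. there exists c ∈ K^× with det(Y) = det(B)·c². -/
open Matrix Finset

theorem skew_det_is_sq {K : Type*} [Field K] (h2 : (2 : K) ≠ 0) :
    ∀ n (A : Matrix (Fin n) (Fin n) K), Aᵀ = -A → IsUnit A.det →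
      ∃ c : K, c ≠ 0 ∧ A.det = c ^ 2 := by
  intro n
  induction n using Nat.strong_induction_on with
  | _ n ih =>
  match n with
  | 0 =>
    intro A _ _
    exact ⟨1, one_ne_zero, by simp [Matrix.det_fin_zero]⟩
  | 1 =>
    intro A hA hU
    exfalso
    have hskew : ∀ i j : Fin 1, A j i = -A i j := fun i j => by
      simpa using congrFun (congrFun hA i) j
    have h0 : A 0 0 = 0 := by
      have h2' : A 0 0 * 2 = 0 := by linear_combination hskew 0 0
      exact (mul_eq_zero.mp h2').resolve_right h2
    rw [Matrix.det_fin_one, h0] at hU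
    exact hU.ne_zero rfl
  | (m + 2) =>
    have hv0 : ∀ x : Fin (m+2), x = 0 ↔ (x : ℕ) = 0 := fun x => by
      rw [Fin.ext_iff]; simp
    have hv1 : ∀ x : Fin (m+2), x = 1 ↔ (x : ℕ) = 1 := fun x => by
      rw [Fin.ext_iff]; simp
    have h01 : (0 : Fin (m+2)) ≠ 1 := Fin.ne_of_val_ne (by simp)
    -- first handle the case A 0 1 ≠ 0, then reduce the general case to it by a swap
    suffices key : ∀ (A : Matrix (Fin (m+2)) (Fin (m+2)) K), Aᵀ = -A → IsUnit A.det →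
        A 0 1 ≠ 0 → ∃ c : K, c ≠ 0 ∧ A.det = c ^ 2 by
      intro A hA hU
      have hskew : ∀ i j : Fin (m+2), A j i = -A i j := fun i j => by
        simpa using congrFun (congrFun hA i) j
      have hdiag : ∀ i, A i i = 0 := by
        intro i
        have h2' : A i i * 2 = 0 := by linear_combination hskew i i
        exact (mul_eq_zero.mp h2').resolve_right h2
      obtain ⟨j, hj⟩ : ∃ j, A 0 j ≠ 0 := by
        by_contra h
        push_neg at h
        exact hU.ne_zero (Matrix.det_eq_zero_of_row_eq_zero 0 h)
      have hj0 : j ≠ 0 := fun h => hj (h ▸ hdiag 0)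
      set σ := Equiv.swap (1 : Fin (m+2)) j with hσ
      set A' := A.submatrix σ σ with hA'
      have hσ0 : σ 0 = 0 := Equiv.swap_apply_of_ne_of_ne h01 (Ne.symm hj0)
      have hσ1 : σ 1 = j := Equiv.swap_apply_left 1 j
      have hA'skew : A'ᵀ = -A' := by
        ext i k
        simp only [hA', Matrix.transpose_apply, Matrix.submatrix_apply, Matrix.neg_apply]
        exact hskew (σ i) (σ k)
      have hA'det : A'.det = A.det := Matrix.det_submatrix_equiv_self σ A
      have hA'unit : IsUnit A'.det := hA'det ▸ hU
      have hA'01 : A' 0 1 ≠ 0 := by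
        simpa [hA', Matrix.submatrix_apply, hσ0, hσ1] using hj
      obtain ⟨c, hc, hcd⟩ := key A' hA'skew hA'unit hA'01
      exact ⟨c, hc, hA'det ▸ hcd⟩
    intro A hA hU ha
    have hskew : ∀ i j : Fin (m+2), A j i = -A i j := fun i j => by
      simpa using congrFun (congrFun hA i) j
    have hdiag : ∀ i, A i i = 0 := by
      intro i
      have h2' : A i i * 2 = 0 := by linear_combination hskew i i
      exact (mul_eq_zero.mp h2').resolve_right h2
    set a := A 0 1 with haa
    -- the congruence matrix
    set E : Matrix (Fin (m+2)) (Fin (m+2)) K := fun i k =>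
      if i = k then 1 else if k = 0 ∨ k = 1 then 0
      else if i = 0 then A 1 k / a else if i = 1 then -(A 0 k) / a else 0 with hE
    have hEcol0 : ∀ q, E q 0 = if q = 0 then 1 else 0 := by
      intro q; by_cases h : q = 0 <;> simp [hE, h]
    have hEcol1 : ∀ q, E q 1 = if q = 1 then 1 else 0 := by
      intro q; by_cases h : q = 1 <;> simp [hE, h, h01.symm]
    have hEcol : ∀ k, k ≠ 0 → k ≠ 1 → ∀ q, E q k =
        (if q = k then 1 else 0) + (if q = 0 then A 1 k / a else 0)
          + (if q = 1 then -(A 0 k) / a else 0) := by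
      intro k hk0 hk1 q
      rcases eq_or_ne q k with hqk | hqk
      · subst hqk; simp [hE, hk0, hk1]
      · rcases eq_or_ne q 0 with hq0 | hq0
        · subst hq0; simp [hE, hqk, hk0, hk1, h01]
        · rcases eq_or_ne q 1 with hq1 | hq1
          · subst hq1; simp [hE, hqk, hk0, hk1, h01.symm]
          · simp [hE, hqk, hq0, hq1, hk0, hk1]
    have hdetE : E.det = 1 := by
      have ht : E.BlockTriangular id := by
        intro i j hij
        have hij' : (j : ℕ) < (i : ℕ) := hij
        have hne : i ≠ j := Fin.ne_of_val_ne (by omega)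
        by_cases hj : j = 0 ∨ j = 1
        · simp [hE, hne, hj]
        · push_neg at hj
          have hjv0 : (j : ℕ) ≠ 0 := fun h => hj.1 ((hv0 j).mpr h)
          have hjv1 : (j : ℕ) ≠ 1 := fun h => hj.2 ((hv1 j).mpr h)
          have hi0 : i ≠ 0 := fun h => by rw [hv0] at h; omega
          have hi1 : i ≠ 1 := fun h => by rw [hv1] at h; omega
          simp [hE, hne, hj.1, hj.2, hi0, hi1]
      rw [Matrix.det_of_upperTriangular ht]
      apply Finset.prod_eq_one
      intro i _
      simp [hE]
    set M := Eᵀ * A * E with hM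
    have hrow : ∀ i : Fin (m+2), i = 0 ∨ i = 1 → ∀ q, (Eᵀ * A) i q = A i q := by
      rintro i hi q
      have hcol : ∀ p, E p i = if p = i then 1 else 0 := by
        rcases hi with h | h <;> subst h
        · exact hEcol0
        · exact hEcol1
      rw [Matrix.mul_apply]
      simp [Matrix.transpose_apply, hcol, ite_mul, one_mul, zero_mul,
        Finset.sum_ite_eq, Finset.sum_ite_eq']
    have hMrow : ∀ i, i = 0 ∨ i = 1 → ∀ q, M i q = ∑ x, A i x * E x q := by
      intro i hi q
      rw [hM, Matrix.mul_apply]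
      exact Finset.sum_congr rfl fun x _ => by rw [hrow i hi x]
    have hM00 : M 0 0 = 0 := by
      rw [hMrow 0 (Or.inl rfl) 0]
      simp [hEcol0, mul_ite, mul_one, mul_zero, Finset.sum_ite_eq', hdiag]
    have hM11 : M 1 1 = 0 := by
      rw [hMrow 1 (Or.inr rfl) 1]
      simp [hEcol1, mul_ite, mul_one, mul_zero, Finset.sum_ite_eq', hdiag]
    have hM01 : M 0 1 = a := by
      rw [hMrow 0 (Or.inl rfl) 1]
      simp [hEcol1, mul_ite, mul_one, mul_zero, Finset.sum_ite_eq', haa]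
    have hM10 : M 1 0 = -a := by
      rw [hMrow 1 (Or.inr rfl) 0]
      simp [hEcol0, mul_ite, mul_one, mul_zero, Finset.sum_ite_eq']
      rw [haa]
      exact hskew 0 1
    have hMtop0 : ∀ k, k ≠ 0 → k ≠ 1 → M 0 k = 0 := by
      intro k hk0 hk1
      rw [hMrow 0 (Or.inl rfl) k]
      simp only [hEcol k hk0 hk1, mul_add, Finset.sum_add_distrib, mul_ite, mul_one,
        mul_zero, Finset.sum_ite_eq', Finset.mem_univ, if_true]
      rw [hdiag 0, ← haa]
      field_simp
      ring
    have hMtop1 : ∀ k, k ≠ 0 → k ≠ 1 → M 1 k = 0 := by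
      intro k hk0 hk1
      rw [hMrow 1 (Or.inr rfl) k]
      simp only [hEcol k hk0 hk1, mul_add, Finset.sum_add_distrib, mul_ite, mul_one,
        mul_zero, Finset.sum_ite_eq', Finset.mem_univ, if_true]
      rw [hdiag 1, hskew 0 1, ← haa]
      field_simp
      ring
    have hMskew : ∀ i j, M j i = -M i j := by
      have hMT : Mᵀ = -M := by
        rw [hM, Matrix.transpose_mul, Matrix.transpose_mul, Matrix.transpose_transpose,
          hA, Matrix.neg_mul, Matrix.mul_neg, ← Matrix.mul_assoc]
      intro i j
      simpa using congrFun (congrFun hMT i) j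
    have hdetM : M.det = A.det := by
      simp [hM, Matrix.det_mul, Matrix.det_transpose, hdetE]
    set e : Fin 2 ⊕ Fin m ≃ Fin (m+2) :=
      finSumFinEquiv.trans (finCongr (by omega)) with he
    have he0 : e (Sum.inl 0) = 0 := by
      apply Fin.ext; simp [he]
    have he1 : e (Sum.inl 1) = 1 := by
      apply Fin.ext; simp [he]
    have her : ∀ j : Fin m, ((e (Sum.inr j)) : ℕ) = 2 + (j : ℕ) := by
      intro j; simp [he]; omega
    have her0 : ∀ j : Fin m, e (Sum.inr j) ≠ 0 := by
      intro j h; rw [hv0, her j] at h; omega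
    have her1 : ∀ j : Fin m, e (Sum.inr j) ≠ 1 := by
      intro j h; rw [hv1, her j] at h; omega
    set C : Matrix (Fin m) (Fin m) K :=
      Matrix.of fun i j => M (e (Sum.inr i)) (e (Sum.inr j)) with hC
    have hblock : M.submatrix e e = Matrix.fromBlocks !![(0:K), a; -a, 0] 0 0 C := by
      ext i j
      rcases i with i | i <;> rcases j with j | j
      · fin_cases i <;> fin_cases j <;>
          simp [Matrix.submatrix_apply, he0, he1, hM00, hM01, hM10, hM11]
      · fin_cases i <;> simp [Matrix.submatrix_apply, he0, he1]
        · exact hMtop0 _ (her0 j) (her1 j)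
        · exact hMtop1 _ (her0 j) (her1 j)
      · fin_cases j <;> simp [Matrix.submatrix_apply, he0, he1] <;> rw [hMskew]
        · rw [hMtop0 _ (her0 i) (her1 i)]; simp
        · rw [hMtop1 _ (her0 i) (her1 i)]; simp
      · simp [Matrix.submatrix_apply, hC]
    have hdet2 : A.det = a * a * C.det := by
      have h1 : (M.submatrix e e).det = M.det := Matrix.det_submatrix_equiv_self e M
      rw [← hdetM, ← h1, hblock, Matrix.det_fromBlocks_zero₂₁, Matrix.det_fin_two_of]
      ring
    have hCskew : Cᵀ = -C := by
      ext i j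
      simp only [Matrix.transpose_apply, Matrix.neg_apply, hC, Matrix.of_apply]
      exact hMskew _ _
    have hCunit : IsUnit C.det := by
      rw [isUnit_iff_ne_zero]
      intro h
      rw [h, mul_zero] at hdet2
      exact hU.ne_zero hdet2
    obtain ⟨c, hc0, hcd⟩ := ih m (by omega) C hCskew hCunit
    exact ⟨a * c, mul_ne_zero ha hc0, by rw [hdet2, hcd]; ring⟩

/-- For a field `K` of characteristic ≠ 2, `n` a positive integer, an invertible
symmetric matrix `B ∈ K^{n×n}` and an invertible skew-adjoint matrix
`Y ∈ E₋(B) = {X | B Xᵀ B⁻¹ = -X}`, the determinants of `Y` and `B` lie in the same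
square class of `K`: there is `c ∈ K^×` with `det Y = det B · c²`. -/
theorem det_invertible_skew_adjoint_in_square_class_of_detB
    {K : Type*} [Field K] (h2 : (2 : K) ≠ 0) {n : ℕ} (hn : 0 < n)
    (B : Matrix (Fin n) (Fin n) K) (hBunit : IsUnit B.det) (hBsym : Bᵀ = B)
    (Y : Matrix (Fin n) (Fin n) K) (hY : B * Yᵀ * B⁻¹ = -Y) (hYunit : IsUnit Y.det) :
    ∃ c : K, c ≠ 0 ∧ Y.det = B.det * c ^ 2 := by
  have hBinv : B⁻¹ * B = 1 := Matrix.nonsing_inv_mul B hBunit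
  have hBinvT : B⁻¹ᵀ = B⁻¹ := by
    rw [Matrix.transpose_nonsing_inv, hBsym]
  have hAskew : (B⁻¹ * Y)ᵀ = -(B⁻¹ * Y) := by
    have h := congrArg (fun X => B⁻¹ * X) hY
    rw [← Matrix.mul_assoc, ← Matrix.mul_assoc, hBinv, Matrix.one_mul, Matrix.mul_neg] at h
    rw [Matrix.transpose_mul, hBinvT, h]
  have hdetBinv : (B⁻¹).det = (B.det)⁻¹ := by
    rw [Matrix.det_nonsing_inv, Ring.inverse_eq_inv']
  have hBd : B.det ≠ 0 := hBunit.ne_zero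
  have hAunit : IsUnit (B⁻¹ * Y).det := by
    rw [Matrix.det_mul, hdetBinv, isUnit_iff_ne_zero]
    exact mul_ne_zero (inv_ne_zero hBd) hYunit.ne_zero
  obtain ⟨c, hc0, hcd⟩ := skew_det_is_sq h2 n (B⁻¹ * Y) hAskew hAunit
  refine ⟨c, hc0, ?_⟩
  rw [Matrix.det_mul, hdetBinv] at hcd
  field_simp at hcd
  rw [hcd]
end

section
/- Let K be a field of characteristic ≠ 2, B ∈ GL_n(K) symmetric, and g ∈ GL_n(K) an isometry of B, i.e. g B gᵀ = B. Let P be the characteristic polynomial of g and assume P(1)·P(−1) ≠ 0. Then n is even and det(g) = 1. -/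
/-!
An isometry `g` of a nondegenerate form `B` satisfies `g⁻¹ = B gᵀ B⁻¹`, so `g` and `g⁻¹` have the
same characteristic polynomial `P`. On the other hand, for `ε² = 1` one has
`ε - g⁻¹ = g⁻¹ · (-ε) · (ε - g)`, hence `P(ε) = (det g)⁻¹ (-ε)ⁿ P(ε)`. When `P(ε) ≠ 0` this gives
`det g = (-ε)ⁿ`: at `ε = -1` it says `det g = 1`, and then at `ε = 1` it says `(-1)ⁿ = 1`.
-/

open Matrix

namespace Matrix

variable {R : Type*} [CommRing R] {n : Type*} [Fintype n] [DecidableEq n]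

theorem mul_mul_transpose_mul_inv_eq_one {B g : Matrix n n R} (hB : IsUnit B.det)
    (hiso : g * B * gᵀ = B) : g * (B * gᵀ * B⁻¹) = 1 := by
  rw [← Matrix.mul_assoc, ← Matrix.mul_assoc, hiso, mul_nonsing_inv B hB]

theorem charpoly_inv_eq_of_mul_mul_transpose_eq {B g : Matrix n n R} (hB : IsUnit B.det)
    (hiso : g * B * gᵀ = B) : g⁻¹.charpoly = g.charpoly := by
  rw [inv_eq_right_inv (mul_mul_transpose_mul_inv_eq_one hB hiso), charpoly_mul_comm,
    ← Matrix.mul_assoc, nonsing_inv_mul B hB, Matrix.one_mul, charpoly_transpose]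

theorem eval_charpoly_inv_of_mul_self_eq_one {g : Matrix n n R} (hg : IsUnit g.det) {ε : R}
    (hε : ε * ε = 1) :
    g⁻¹.charpoly.eval ε = g⁻¹.det * (-ε) ^ Fintype.card n * g.charpoly.eval ε := by
  have hfactor : scalar n ε - g⁻¹ = g⁻¹ * ((-ε) • (scalar n ε - g)) := by
    rw [Matrix.mul_smul, Matrix.mul_sub, nonsing_inv_mul g hg, scalar_apply,
      ← smul_one_eq_diagonal, Matrix.mul_smul, Matrix.mul_one, smul_sub, smul_smul, neg_mul, hε,
      neg_smul, one_smul, neg_smul, sub_neg_eq_add, neg_add_eq_sub]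
  rw [eval_charpoly, eval_charpoly, hfactor, det_mul, det_smul, mul_assoc]

theorem det_inv_mul_neg_pow_card_eq_one [IsDomain R] {B g : Matrix n n R} (hB : IsUnit B.det)
    (hiso : g * B * gᵀ = B) {ε : R} (hε : ε * ε = 1) (hP : g.charpoly.eval ε ≠ 0) :
    g⁻¹.det * (-ε) ^ Fintype.card n = 1 := by
  have hg : IsUnit g.det := isUnit_det_of_right_inverse (mul_mul_transpose_mul_inv_eq_one hB hiso)
  have h := eval_charpoly_inv_of_mul_self_eq_one hg hε
  rw [charpoly_inv_eq_of_mul_mul_transpose_eq hB hiso] at h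
  exact (mul_eq_right₀ hP).mp h.symm

end Matrix

theorem even_dim_and_det_one_of_isometry_general
    {K : Type*} [Field K] (h2 : (2 : K) ≠ 0) {n : ℕ}
    (B : Matrix (Fin n) (Fin n) K) (hBunit : IsUnit B.det)
    (g : Matrix (Fin n) (Fin n) K)
    (hiso : g * B * gᵀ = B)
    (hP : g.charpoly.eval 1 * g.charpoly.eval (-1) ≠ 0) :
    Even n ∧ g.det = 1 := by
  obtain ⟨hP1, hPneg1⟩ := mul_ne_zero_iff.mp hP
  have hdet_inv : g⁻¹.det = 1 := by
    simpa using det_inv_mul_neg_pow_card_eq_one hBunit hiso (by norm_num) hPneg1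
  have hneg_one_pow : (-1 : K) ^ n = 1 := by
    simpa [hdet_inv] using det_inv_mul_neg_pow_card_eq_one hBunit hiso (one_mul 1) hP1
  refine ⟨(neg_one_pow_eq_one_iff_even ?_).mp hneg_one_pow, ?_⟩
  · exact fun h => h2 (by linear_combination -h)
  · rwa [det_nonsing_inv, Ring.inverse_eq_inv, inv_eq_one] at hdet_inv

/-- Let `K` be a field of characteristic ≠ 2, `B ∈ GL_n(K)` symmetric and
`g ∈ GL_n(K)` an isometry of `B`, i.e. `g B gᵀ = B`.  If the characteristic
polynomial `P` of `g` satisfies `P(1)·P(-1) ≠ 0`, then `n` is even and `det g = 1`. -/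
theorem even_dim_and_det_one_of_isometry
    {K : Type*} [Field K] (h2 : (2 : K) ≠ 0) {n : ℕ}
    (B : Matrix (Fin n) (Fin n) K) (hBunit : IsUnit B.det) (hBsym : Bᵀ = B)
    (g : Matrix (Fin n) (Fin n) K) (hgunit : IsUnit g.det)
    (hiso : g * B * gᵀ = B)
    (hP : g.charpoly.eval 1 * g.charpoly.eval (-1) ≠ 0) :
    Even n ∧ g.det = 1 :=
  even_dim_and_det_one_of_isometry_general h2 B hBunit g hiso hP
end

section
/- Let K be a field of characteristic ≠ 2, B ∈ GL_n(K) symmetric, and g ∈ GL_n(K) an isometry of B, i.e. g B gᵀ = B. Let P be the characteristic polynomial of g and assume P(1)·P(−1) ≠ 0. Then det(B), det(g − g⁻¹), and P(1)·P(−1) all lie in the same square class of K; in particular there exist c, c' ∈ K^× with det(B) = det(g − g⁻¹)·c² = P(1)·P(−1)·(c')². -/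
/-!
Because `g B gᵀ = B`, the matrix `(g - g⁻¹) B = g B - B gᵀ` is skew-symmetric, and in
characteristic `≠ 2` a skew-symmetric matrix has square determinant: a nonzero entry `a` spans a
`2 × 2` block of determinant `a²`, whose Schur complement is again skew-symmetric. Hence
`det B ≡ det (g - g⁻¹)` modulo squares. Moreover `(1 + g) B = g B (1 + g)ᵀ`, so `det g = 1` as soon
as `P(-1) ≠ 0`, and then `det (g - g⁻¹) = det (g - 1) det (g + 1) = P(1) P(-1)`.
-/

open Matrix

namespace Matrix

variable {R K : Type*} [CommRing R] [Field K] {m n ι : Type*}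

theorem diag_eq_zero_of_transpose_eq_neg (h2 : (2 : K) ≠ 0) {A : Matrix ι ι K}
    (hA : Aᵀ = -A) (i : ι) : A i i = 0 := by
  have h : A i i = -A i i := congrFun (congrFun hA i) i
  exact (mul_eq_zero.mp (by linear_combination h : 2 * A i i = 0)).resolve_left h2

theorem det_fin_two_of_transpose_eq_neg (h2 : (2 : K) ≠ 0) {A : Matrix (Fin 2) (Fin 2) K}
    (hA : Aᵀ = -A) : A.det = A 0 1 ^ 2 := by
  have h10 : A 1 0 = -A 0 1 := congrFun (congrFun hA 0) 1
  rw [det_fin_two, diag_eq_zero_of_transpose_eq_neg h2 hA, diag_eq_zero_of_transpose_eq_neg h2 hA,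
    h10]
  ring

variable [Fintype m] [DecidableEq m] [Fintype ι] [DecidableEq ι]

theorem transpose_invOf_eq_neg {X : Matrix m m R} [Invertible X] (hX : Xᵀ = -X) :
    (⅟X)ᵀ = -⅟X := by
  have h : X * -(⅟X)ᵀ = 1 := by
    rw [mul_neg, ← neg_mul, ← hX, ← transpose_mul, invOf_mul_self, transpose_one]
  exact neg_eq_iff_eq_neg.mp (invOf_eq_right_inv h).symm

theorem schur_transpose_eq_neg {X : Matrix m m R} [Invertible X] {Y : Matrix m n R}
    {Z : Matrix n m R} {W : Matrix n n R}
    (h : (fromBlocks X Y Z W)ᵀ = -fromBlocks X Y Z W) :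
    (W - Z * ⅟X * Y)ᵀ = -(W - Z * ⅟X * Y) := by
  rw [fromBlocks_transpose, fromBlocks_neg] at h
  obtain ⟨hX, hZY, hYZ, hW⟩ := fromBlocks_inj.mp h
  rw [transpose_sub, transpose_mul, transpose_mul, transpose_invOf_eq_neg hX, hW, hZY, hYZ]
  simp only [Matrix.neg_mul, Matrix.mul_neg, neg_neg, Matrix.mul_assoc]
  abel

theorem exists_det_eq_sq_of_transpose_eq_neg_fin (h2 : (2 : K) ≠ 0) :
    ∀ {k : ℕ} (A : Matrix (Fin k) (Fin k) K), Aᵀ = -A → ∃ s, A.det = s ^ 2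
  | 0, A, _ => ⟨1, by simp⟩
  | 1, A, hA => ⟨0, by rw [det_unique, diag_eq_zero_of_transpose_eq_neg h2 hA]; ring⟩
  | k + 2, A, hA => by
    by_cases hrow : ∀ j, A 0 j = 0
    · exact ⟨0, by rw [det_eq_zero_of_row_eq_zero 0 hrow]; ring⟩
    push Not at hrow
    obtain ⟨j, hj⟩ := hrow
    have hj0 : j ≠ 0 := by
      rintro rfl
      exact hj (diag_eq_zero_of_transpose_eq_neg h2 hA 0)
    let e : Fin 2 ⊕ Fin k ≃ Fin (k + 2) :=
      (finSumFinEquiv.trans (finCongr (add_comm 2 k))).trans (Equiv.swap 1 j)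
    set M := A.submatrix e e with hM_def
    have hM : Mᵀ = -M := by rw [transpose_submatrix, hA, submatrix_neg]; rfl
    have hX : M.toBlocks₁₁ᵀ = -M.toBlocks₁₁ := by
      ext i k
      exact congrFun (congrFun hM (Sum.inl i)) (Sum.inl k)
    have he0 : e (Sum.inl 0) = 0 :=
      Equiv.swap_apply_of_ne_of_ne (by simp : (0 : Fin (k + 2)) ≠ 1) hj0.symm
    have he1 : e (Sum.inl 1) = j := Equiv.swap_apply_left 1 j
    have hX01 : M.toBlocks₁₁ 0 1 = A 0 j := by
      simp only [M, toBlocks₁₁, of_apply, submatrix_apply, he0, he1]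
    have hXdet : M.toBlocks₁₁.det = A 0 j ^ 2 := by
      rw [det_fin_two_of_transpose_eq_neg h2 hX, hX01]
    let := invertibleOfIsUnitDet _ (hXdet ▸ (pow_ne_zero 2 hj).isUnit)
    rw [← fromBlocks_toBlocks M] at hM
    obtain ⟨s, hs⟩ := exists_det_eq_sq_of_transpose_eq_neg_fin h2 _ (schur_transpose_eq_neg hM)
    refine ⟨A 0 j * s, ?_⟩
    rw [← det_submatrix_equiv_self e, ← hM_def, ← fromBlocks_toBlocks M, det_fromBlocks₁₁, hXdet,
      hs]
    ring

theorem exists_det_eq_sq_of_transpose_eq_neg (h2 : (2 : K) ≠ 0)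
    (A : Matrix ι ι K) (hA : Aᵀ = -A) : ∃ s, A.det = s ^ 2 := by
  let e := (Fintype.equivFin ι).symm
  obtain ⟨s, hs⟩ := exists_det_eq_sq_of_transpose_eq_neg_fin h2 (A.submatrix e e)
    (by rw [transpose_submatrix, hA, submatrix_neg]; rfl)
  exact ⟨s, by rwa [det_submatrix_equiv_self] at hs⟩

theorem eval_one_charpoly (g : Matrix ι ι R) : g.charpoly.eval 1 = (1 - g).det := by
  rw [eval_charpoly, map_one]

theorem eval_neg_one_charpoly (g : Matrix ι ι R) :
    g.charpoly.eval (-1) = (-1) ^ Fintype.card ι * (1 + g).det := by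
  rw [eval_charpoly, map_neg, map_one, ← neg_add', det_neg]

theorem det_sub_nonsing_inv_mul_det {g : Matrix ι ι R} (hg : IsUnit g.det) :
    (g - g⁻¹).det * g.det = g.charpoly.eval 1 * g.charpoly.eval (-1) := by
  have hfactor : (g - g⁻¹) * g = -(1 - g) * (1 + g) := by
    rw [sub_mul, nonsing_inv_mul g hg]
    noncomm_ring
  rw [← det_mul, hfactor, det_mul, det_neg, eval_one_charpoly, eval_neg_one_charpoly]
  ring

theorem det_eq_one_of_mul_mul_transpose_eq {g B : Matrix ι ι R} (hB : IsUnit B.det)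
    (h1g : IsUnit (1 + g).det) (hiso : g * B * gᵀ = B) : g.det = 1 := by
  have hcomm : g * (B * (1 + g)ᵀ) = (1 + g) * B := by
    rw [transpose_add, transpose_one, Matrix.mul_add, Matrix.mul_one, Matrix.mul_add,
      ← Matrix.mul_assoc g B gᵀ, hiso, Matrix.add_mul, Matrix.one_mul, add_comm]
  have hdet := congrArg det hcomm
  rw [det_mul, det_mul, det_mul, det_transpose] at hdet
  exact (hB.mul h1g).mul_left_cancel (by linear_combination hdet)

theorem transpose_sub_nonsing_inv_mul_eq_neg {g B : Matrix ι ι R} (hg : IsUnit g.det)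
    (hB : Bᵀ = B) (hiso : g * B * gᵀ = B) :
    ((g - g⁻¹) * B)ᵀ = -((g - g⁻¹) * B) := by
  have hinv : g⁻¹ * B = B * gᵀ := by
    rw [← hiso, ← Matrix.mul_assoc, ← Matrix.mul_assoc, nonsing_inv_mul g hg, Matrix.one_mul, hiso]
  rw [Matrix.sub_mul, hinv, transpose_sub, transpose_mul, transpose_mul, hB, transpose_transpose,
    neg_sub]

end Matrix

theorem exists_eq_mul_sq_of_mul_eq_sq {K : Type*} [Field K] {d b s : K} (hd : d ≠ 0) (hb : b ≠ 0)
    (h : d * b = s ^ 2) : ∃ c, c ≠ 0 ∧ b = d * c ^ 2 := by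
  have hs : s ≠ 0 := by
    rintro rfl
    exact mul_ne_zero hd hb (by simpa using h)
  refine ⟨s / d, div_ne_zero hs hd, ?_⟩
  field_simp
  linear_combination h

theorem det_eq_det_g_sub_g_inv_square_class_general
    {K : Type*} [Field K] (h2 : (2 : K) ≠ 0) {n : ℕ}
    (B : Matrix (Fin n) (Fin n) K) (hBunit : IsUnit B.det) (hBsym : Bᵀ = B)
    (g : Matrix (Fin n) (Fin n) K)
    (hiso : g * B * gᵀ = B)
    (hP : g.charpoly.eval 1 * g.charpoly.eval (-1) ≠ 0) :
    (∃ c : K, c ≠ 0 ∧ B.det = (g - g⁻¹).det * c ^ 2) ∧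
      (∃ c' : K, c' ≠ 0 ∧ B.det = g.charpoly.eval 1 * g.charpoly.eval (-1) * c' ^ 2) := by
  have h1g : IsUnit (1 + g).det := by
    have hPneg := right_ne_zero_of_mul hP
    rw [eval_neg_one_charpoly] at hPneg
    exact (right_ne_zero_of_mul hPneg).isUnit
  have hg : g.det = 1 := det_eq_one_of_mul_mul_transpose_eq hBunit h1g hiso
  have hgunit : IsUnit g.det := hg ▸ isUnit_one
  have hdet : (g - g⁻¹).det = g.charpoly.eval 1 * g.charpoly.eval (-1) := by
    simpa [hg] using det_sub_nonsing_inv_mul_det hgunit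
  obtain ⟨s, hs⟩ := exists_det_eq_sq_of_transpose_eq_neg h2 _
    (transpose_sub_nonsing_inv_mul_eq_neg hgunit hBsym hiso)
  rw [det_mul] at hs
  obtain ⟨c, hc, hB⟩ := exists_eq_mul_sq_of_mul_eq_sq (hdet ▸ hP) hBunit.ne_zero hs
  exact ⟨⟨c, hc, hB⟩, ⟨c, hc, hdet ▸ hB⟩⟩

/-- Let `K` be a field of characteristic ≠ 2, `B ∈ GL_n(K)` symmetric and
`g ∈ GL_n(K)` an isometry of `B`, i.e. `g B gᵀ = B`, whose characteristic polynomial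
`P` satisfies `P(1)·P(-1) ≠ 0`.  Then `det B`, `det (g - g⁻¹)` and `P(1)·P(-1)` all lie
in the same square class of `K`. -/
theorem det_eq_det_g_sub_g_inv_square_class
    {K : Type*} [Field K] (h2 : (2 : K) ≠ 0) {n : ℕ}
    (B : Matrix (Fin n) (Fin n) K) (hBunit : IsUnit B.det) (hBsym : Bᵀ = B)
    (g : Matrix (Fin n) (Fin n) K) (hgunit : IsUnit g.det)
    (hiso : g * B * gᵀ = B)
    (hP : g.charpoly.eval 1 * g.charpoly.eval (-1) ≠ 0) :
    (∃ c : K, c ≠ 0 ∧ B.det = (g - g⁻¹).det * c ^ 2) ∧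
      (∃ c' : K, c' ≠ 0 ∧ B.det = g.charpoly.eval 1 * g.charpoly.eval (-1) * c' ^ 2) :=
  det_eq_det_g_sub_g_inv_square_class_general h2 B hBunit hBsym g hiso hP
end

section
/- Let G be a finite group, L a field of characteristic 0, ρ : G → GL_n(L) an absolutely irreducible representation (i.e. the L-span of {ρ(g) : g ∈ G} is all of L^{n×n}), and B ∈ F(ρ) invertible. Then E₋(B) = {X ∈ L^{n×n} : B Xᵀ B⁻¹ = −X} equals the L-span of the set {ρ(g) − ρ(g⁻¹) : g ∈ G}. -/
open Matrix

/-- Let `G` be a finite group, `L` a field of characteristic `0`, `ρ : G → GL_n(L)` an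
absolutely irreducible representation and `B ∈ F(ρ)` invertible.  Then
`E₋(B) = {X | B Xᵀ B⁻¹ = -X}` equals the `L`-span of `{ρ(g) - ρ(g⁻¹) | g ∈ G}`. -/
theorem skew_adjoint_eq_span_rho_sub_rho_inv
    {G : Type*} [Group G] [Finite G] {L : Type*} [Field L] [CharZero L] {n : ℕ}
    (ρ : G →* GL (Fin n) L)
    (habs : Submodule.span L
      (Set.range fun g : G => (ρ g : Matrix (Fin n) (Fin n) L)) = ⊤)
    (B : Matrix (Fin n) (Fin n) L) (hBsym : Bᵀ = B)
    (hBinv : ∀ g : G,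
      (ρ g : Matrix (Fin n) (Fin n) L) * B * (ρ g : Matrix (Fin n) (Fin n) L)ᵀ = B)
    (hBunit : IsUnit B.det) :
    {X : Matrix (Fin n) (Fin n) L | B * Xᵀ * B⁻¹ = -X} =
      ↑(Submodule.span L (Set.range fun g : G =>
        (ρ g : Matrix (Fin n) (Fin n) L) - (ρ g⁻¹ : Matrix (Fin n) (Fin n) L))) := by
  have hB1 : B * B⁻¹ = 1 := Matrix.mul_nonsing_inv B hBunit
  have hσρ : ∀ g : G, B * (ρ g : Matrix (Fin n) (Fin n) L)ᵀ * B⁻¹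
      = (ρ g⁻¹ : Matrix (Fin n) (Fin n) L) := by
    intro g
    have h1 : (ρ g : Matrix (Fin n) (Fin n) L) *
        (B * (ρ g : Matrix (Fin n) (Fin n) L)ᵀ * B⁻¹) = 1 := by
      rw [← Matrix.mul_assoc, ← Matrix.mul_assoc, hBinv g, hB1]
    have h2 := Matrix.inv_eq_right_inv h1
    rw [← h2, map_inv]
    exact (Matrix.coe_units_inv (ρ g)).symm
  set T : Set (Matrix (Fin n) (Fin n) L) := Set.range fun g : G =>
      (ρ g : Matrix (Fin n) (Fin n) L) - (ρ g⁻¹ : Matrix (Fin n) (Fin n) L) with hT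
  let φ : Matrix (Fin n) (Fin n) L →ₗ[L] Matrix (Fin n) (Fin n) L :=
    { toFun := fun Y => (2⁻¹ : L) • (Y - B * Yᵀ * B⁻¹)
      map_add' := fun X Y => by
        simp only [Matrix.transpose_add, Matrix.add_mul, Matrix.mul_add]
        module
      map_smul' := fun c Y => by
        simp only [Matrix.transpose_smul, Matrix.smul_mul, Matrix.mul_smul, RingHom.id_apply]
        module }
  have hφρ : ∀ g : G, φ (ρ g) = (2⁻¹ : L) •
      ((ρ g : Matrix (Fin n) (Fin n) L) - (ρ g⁻¹ : Matrix (Fin n) (Fin n) L)) := by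
    intro g
    simp only [φ, LinearMap.coe_mk, AddHom.coe_mk, hσρ g]
  ext X
  simp only [Set.mem_setOf_eq, SetLike.mem_coe]
  constructor
  · intro hX
    have hXtop : X ∈ Submodule.span L
        (Set.range fun g : G => (ρ g : Matrix (Fin n) (Fin n) L)) := by
      rw [habs]; trivial
    have hmap : Submodule.map φ (Submodule.span L
        (Set.range fun g : G => (ρ g : Matrix (Fin n) (Fin n) L)))
        ≤ Submodule.span L T := by
      rw [Submodule.map_span]
      apply Submodule.span_le.2
      rintro _ ⟨_, ⟨g, rfl⟩, rfl⟩
      rw [hφρ g]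
      exact Submodule.smul_mem _ _ (Submodule.subset_span ⟨g, rfl⟩)
    have hfix : φ X = X := by
      simp only [φ, LinearMap.coe_mk, AddHom.coe_mk, hX, sub_neg_eq_add, ← two_smul L,
        smul_smul]
      rw [inv_mul_cancel₀ (two_ne_zero), one_smul]
    rw [← hfix]
    exact hmap ⟨X, hXtop, rfl⟩
  · intro hX
    induction hX using Submodule.span_induction with
    | mem x hx =>
      obtain ⟨g, rfl⟩ := hx
      have h1 := hσρ g
      have h2 := hσρ g⁻¹
      rw [inv_inv] at h2
      simp only [Matrix.transpose_sub, Matrix.mul_sub, Matrix.sub_mul, h1, h2, neg_sub]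
    | zero => simp
    | add x y _ _ hx hy =>
      simp only [Matrix.transpose_add, Matrix.mul_add, Matrix.add_mul, hx, hy, neg_add]
    | smul c x _ hx =>
      simp only [Matrix.transpose_smul, Matrix.smul_mul, Matrix.mul_smul, hx, smul_neg]
end

section
/- Let G be a finite group and ρ : G → GL_n(ℝ) an absolutely irreducible real representation (i.e. the ℝ-span of {ρ(g) : g ∈ G} is all of ℝ^{n×n}) with n even. Then the ℚ-span of the set {ρ(g) − ρ(g⁻¹) : g ∈ G} inside ℝ^{n×n} contains an invertible matrix; i.e. there exist g₁,…,g_m ∈ G and rational numbers a₁,…,a_m such that the matrix Σᵢ aᵢ·(ρ(gᵢ) − ρ(gᵢ⁻¹)) is invertible. -/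
/-!
Averaging the standard inner product over `G` gives a positive definite `B` with
`ρ(g⁻¹) = B⁻¹ ρ(g)ᵀ B`, so `ρ(g) - ρ(g⁻¹)` is the image of `ρ(g)` under the linear map
`T M = M - B⁻¹ Mᵀ B`. Absolute irreducibility makes the real span of these elements the whole
range of `T`, which contains `T (B⁻¹ K) = 2 B⁻¹ K` for an invertible skew-symmetric `K` (this
is where `n` even is needed). Invertibility is an open condition and the rational span is dense
in the real span, so it also contains an invertible matrix.
-/

open Matrix
open scoped ComplexOrder

theorem Submodule.span_real_subset_closure_span_rat {E : Type*} [AddCommGroup E] [Module ℝ E]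
    [Module ℚ E] [IsScalarTower ℚ ℝ E] [TopologicalSpace E] [ContinuousAdd E]
    [ContinuousSMul ℝ E] (S : Set E) :
    (span ℝ S : Set E) ⊆ closure (span ℚ S) := by
  intro x hx
  induction hx using Submodule.span_induction with
  | mem x hx => exact subset_closure (subset_span hx)
  | zero => exact subset_closure (zero_mem _)
  | add x y _ _ hx hy => exact map_mem_closure₂ continuous_add hx hy fun _ ha _ hb => add_mem ha hb
  | smul r x _ hx =>
    refine map_mem_closure₂ continuous_smul (Rat.denseRange_cast r) hx ?_
    rintro _ ⟨q, rfl⟩ y hy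
    rw [SetLike.mem_coe, Rat.cast_smul_eq_qsmul]
    exact smul_mem _ q hy

namespace Matrix

theorem exists_transpose_eq_neg_isUnit_det (R : Type*) [CommRing R] {n : ℕ}
    (hn : Even n) : ∃ K : Matrix (Fin n) (Fin n) R, Kᵀ = -K ∧ IsUnit K.det := by
  obtain ⟨m, rfl⟩ := hn
  refine ⟨reindex finSumFinEquiv finSumFinEquiv (J (Fin m) R), ?_, ?_⟩
  · rw [transpose_reindex, J_transpose]
    rfl
  · rw [det_reindex_self]
    exact isUnit_det_J _ _

variable {ι R : Type*} [Fintype ι] [DecidableEq ι] [CommRing R]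

/-- `M` minus its adjoint `B⁻¹ Mᵀ B` for the bilinear form with Gram matrix `B`. -/
noncomputable def subFormAdjoint (B : Matrix ι ι R) : Matrix ι ι R →ₗ[R] Matrix ι ι R where
  toFun M := M - B⁻¹ * Mᵀ * B
  map_add' M N := by rw [transpose_add, Matrix.mul_add, Matrix.add_mul]; abel
  map_smul' c M := by simp [smul_sub]

theorem subFormAdjoint_apply (B M : Matrix ι ι R) : subFormAdjoint B M = M - B⁻¹ * Mᵀ * B :=
  rfl

theorem subFormAdjoint_inv_mul {B K : Matrix ι ι R} (hB : Bᵀ = B) (hdet : IsUnit B.det)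
    (hK : Kᵀ = -K) : subFormAdjoint B (B⁻¹ * K) = (2 : R) • (B⁻¹ * K) := by
  rw [subFormAdjoint_apply, transpose_mul, transpose_nonsing_inv, hB, hK, Matrix.neg_mul,
    Matrix.mul_neg, Matrix.neg_mul, sub_neg_eq_add, Matrix.mul_assoc, Matrix.mul_assoc,
    nonsing_inv_mul _ hdet, Matrix.mul_one, two_smul]

end Matrix

namespace MonoidHom

variable {G 𝕜 ι : Type*} [Group G] [Fintype G] [RCLike 𝕜] [Fintype ι] [DecidableEq ι]
  (ρ : G →* GL ι 𝕜)

def invariantGram : Matrix ι ι 𝕜 := ∑ g, (ρ g : Matrix ι ι 𝕜)ᴴ * ρ g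

theorem posDef_invariantGram : (invariantGram ρ).PosDef := by
  classical
  rw [invariantGram, ← Finset.add_sum_erase _ _ (Finset.mem_univ 1), map_one, Units.val_one,
    conjTranspose_one, one_mul]
  exact PosDef.one.add_posSemidef <|
    posSemidef_sum _ fun g _ => posSemidef_conjTranspose_mul_self _

theorem conjTranspose_mul_invariantGram_mul (h : G) :
    (ρ h : Matrix ι ι 𝕜)ᴴ * invariantGram ρ * ρ h = invariantGram ρ := by
  rw [invariantGram, Finset.mul_sum, Finset.sum_mul]
  refine Fintype.sum_equiv (Equiv.mulRight h) _ _ fun g => ?_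
  simp only [Equiv.coe_mulRight, map_mul, Units.val_mul, conjTranspose_mul, Matrix.mul_assoc]

theorem coe_inv_eq_invariantGram_conj (g : G) :
    (ρ g⁻¹ : Matrix ι ι 𝕜) = (invariantGram ρ)⁻¹ * (ρ g : Matrix ι ι 𝕜)ᴴ * invariantGram ρ := by
  have hdet : IsUnit (invariantGram ρ).det := (posDef_invariantGram ρ).det_pos.ne'.isUnit
  have hB : (ρ g : Matrix ι ι 𝕜)ᴴ * invariantGram ρ = invariantGram ρ * ρ g⁻¹ := by
    calc (ρ g : Matrix ι ι 𝕜)ᴴ * invariantGram ρ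
        = (ρ g : Matrix ι ι 𝕜)ᴴ * invariantGram ρ * (ρ g * ρ g⁻¹ : GL ι 𝕜) := by simp
      _ = invariantGram ρ * ρ g⁻¹ := by
        rw [Units.val_mul, ← Matrix.mul_assoc, conjTranspose_mul_invariantGram_mul]
  rw [Matrix.mul_assoc, hB, ← Matrix.mul_assoc, nonsing_inv_mul _ hdet, Matrix.one_mul]

theorem subFormAdjoint_invariantGram (ρ : G →* GL ι ℝ) (g : G) :
    subFormAdjoint (invariantGram ρ) (ρ g) = (ρ g : Matrix ι ι ℝ) - (ρ g⁻¹ : Matrix ι ι ℝ) := by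
  rw [subFormAdjoint_apply, coe_inv_eq_invariantGram_conj, conjTranspose_eq_transpose_of_trivial]

theorem span_sub_inv_eq_range_subFormAdjoint (ρ : G →* GL ι ℝ)
    (habs : Submodule.span ℝ (Set.range fun g : G => (ρ g : Matrix ι ι ℝ)) = ⊤) :
    Submodule.span ℝ (Set.range fun g : G => (ρ g : Matrix ι ι ℝ) - (ρ g⁻¹ : Matrix ι ι ℝ)) =
      LinearMap.range (subFormAdjoint (invariantGram ρ)) := by
  rw [LinearMap.range_eq_map, ← habs, Submodule.map_span, ← Set.range_comp]
  simp only [Function.comp_def, subFormAdjoint_invariantGram]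

end MonoidHom

/-- Let `G` be a finite group and `ρ : G → GL_n(ℝ)` an absolutely irreducible real
representation with `n` even.  Then the `ℚ`-span of `{ρ(g) - ρ(g⁻¹) | g ∈ G}` inside
`ℝ^{n×n}` contains an invertible matrix. -/
theorem rat_span_skew_elements_contains_invertible
    {G : Type*} [Group G] [Finite G] {n : ℕ}
    (ρ : G →* GL (Fin n) ℝ)
    (habs : Submodule.span ℝ
      (Set.range fun g : G => (ρ g : Matrix (Fin n) (Fin n) ℝ)) = ⊤)
    (hn : Even n) :
    ∃ X ∈ Submodule.span ℚ (Set.range fun g : G =>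
        (ρ g : Matrix (Fin n) (Fin n) ℝ) - (ρ g⁻¹ : Matrix (Fin n) (Fin n) ℝ)),
      IsUnit X.det := by
  have := Fintype.ofFinite G
  obtain ⟨K, hK, hKdet⟩ := exists_transpose_eq_neg_isUnit_det ℝ hn
  set B := ρ.invariantGram
  have hB : B.PosDef := ρ.posDef_invariantGram
  have hBdet : IsUnit B.det := hB.det_pos.ne'.isUnit
  have hX : (2 : ℝ) • (B⁻¹ * K) ∈ Submodule.span ℝ (Set.range fun g : G =>
      (ρ g : Matrix (Fin n) (Fin n) ℝ) - (ρ g⁻¹ : Matrix (Fin n) (Fin n) ℝ)) := by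
    rw [ρ.span_sub_inv_eq_range_subFormAdjoint habs]
    exact ⟨B⁻¹ * K, subFormAdjoint_inv_mul (by simpa [IsSymm] using hB.isHermitian) hBdet hK⟩
  have hXdet : IsUnit ((2 : ℝ) • (B⁻¹ * K)).det := by
    rw [det_smul, det_mul]
    exact (two_ne_zero.isUnit.pow _).mul ((isUnit_nonsing_inv_det_iff.mpr hBdet).mul hKdet)
  obtain ⟨Y, hYdet, hY⟩ := mem_closure_iff.mp (Submodule.span_real_subset_closure_span_rat _ hX)
    _ (Units.isOpen.preimage (continuous_id.matrix_det)) hXdet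
  exact ⟨Y, hY, hYdet⟩
end
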